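/- For Y ≥ 2 and s a complex number with Re(s) ≥ 1, we have -ζ'(s,Y)/ζ(s,Y) = Σ_{n ≤ Y} Λ(n) n^{-s} + O(Y^{1/2 - Re(s)}), where ζ(s,Y) = ∏_{p≤Y}(1 - p^{-s})^{-1} and the implied constant is absolute. -/

import Mathlib

open Complex

/-- The set of primes `p ≤ Y`, as a finset. -/
noncomputable def primesUpTo (Y : ℝ) : Finset ℕ :=
  (Finset.range (⌊Y⌋₊ + 1)).filter Nat.Prime

/-- The partial Euler product `ζ(s, Y) = ∏_{p ≤ Y} (1 - p^{-s})⁻¹`. -/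
noncomputable def zetaY (Y : ℝ) (s : ℂ) : ℂ :=
  ∏ p ∈ primesUpTo Y, (1 - (p : ℂ) ^ (-s))⁻¹

/-! Put `x_p = p^{-s}` and `σ = Re s`. The logarithmic derivative of the Euler product is
`∑_{p ≤ Y} log p · x_p / (1 - x_p)`, while `∑_{n ≤ Y} Λ(n) n^{-s}` truncates each of these
geometric series at the largest power `p^M ≤ Y`; the difference is therefore
`∑_{p ≤ Y} log p · x_p^{M+1} / (1 - x_p)`. As `|x_p| ≤ 1/2` and `q = p^{M+1} > Y`, the term of `p`
is at most `2 log p · q^{-σ} ≤ 2 Y^{1-σ} log p / q`, so it suffices that `∑_{p ≤ Y} log p / q`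
is `O(Y^{-1/2})`. For `p ≤ √Y` use `q > Y` and Chebyshev's bound `θ(√Y) ≤ √Y log 4`; for `p > √Y`
use `q ≥ p²` and bound `∑_{p > √Y} log p / p²` by splitting into dyadic ranges and applying
Chebyshev's bound on each. -/

open Finset ArithmeticFunction

theorem div_one_sub_sub_geom_sum_Icc {K : Type*} [Field K] {x : K} (hx : x ≠ 1) (M : ℕ) :
    x / (1 - x) - ∑ i ∈ Icc 1 M, x ^ i = x ^ (M + 1) / (1 - x) := by
  rw [← Ico_add_one_right_eq_Icc, geom_sum_Ico' hx (by omega), pow_one, ← sub_div]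
  ring

theorem natCast_pow_cpow (p k : ℕ) (s : ℂ) : ((p ^ k : ℕ) : ℂ) ^ s = ((p : ℂ) ^ s) ^ k := by
  rw [Nat.cast_pow, ← natCast_cpow_natCast_mul, cpow_nat_mul]

theorem sum_Icc_vonMangoldt_mul_eq (n : ℕ) (f : ℕ → ℂ) :
    ∑ m ∈ Icc 1 n, (Λ m : ℂ) * f m =
      ∑ p ∈ Nat.primesLE n, ∑ k ∈ Icc 1 (p.log n), (Real.log p : ℂ) * f (p ^ k) := calc
  _ = ∑ m ∈ ((Icc 1 n).filter Nat.Prime).biUnion fun p ↦ image (p ^ ·) (Icc 1 (p.log n)),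
        (Λ m : ℂ) * f m := by
    refine (sum_subset (fun q hq ↦ ?_) fun x hx hx' ↦ ?_).symm
    · simp only [mem_biUnion, mem_filter, mem_Icc, mem_image] at hq ⊢
      obtain ⟨p, _, k, ⟨_, hk⟩, rfl⟩ := hq
      exact ⟨by grind, Nat.pow_le_of_le_log (by linarith) hk⟩
    · suffices Λ x = 0 by simp [this]
      simp only [mem_biUnion, mem_filter, mem_Icc, mem_image, not_exists, not_and, and_imp] at hx'
      rw [vonMangoldt_eq_zero_iff, isPrimePow_nat_iff]
      rintro ⟨p, k, hp, hk, rfl⟩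
      simp only [mem_Icc] at hx
      have hpn : p ≤ n := (Nat.le_of_dvd (by lia) (dvd_pow_self p hk.ne')).trans hx.2
      exact hx' p hp.one_le hpn hp k (by lia) (Nat.le_log_of_pow_le hp.one_lt hx.2) rfl
  _ = ∑ p ∈ (Icc 1 n).filter Nat.Prime, ∑ q ∈ image (p ^ ·) (Icc 1 (p.log n)), (Λ q : ℂ) * f q := by
    rw [sum_biUnion <| by rw [pairwiseDisjoint_iff]; grind [Nat.Prime.pow_inj']]
  _ = ∑ p ∈ Nat.primesLE n, ∑ k ∈ Icc 1 (p.log n), (Λ (p ^ k) : ℂ) * f (p ^ k) := by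
    refine sum_congr (Nat.primesLE_eq_filter_Icc_one n).symm fun p hp ↦ ?_
    exact sum_image fun a _ b _ hab ↦
      Nat.pow_right_injective (Nat.two_le_of_mem_primesLE hp) hab
  _ = _ := by
    refine sum_congr rfl fun p hp ↦ sum_congr rfl fun k hk ↦ ?_
    rw [vonMangoldt_apply_pow (by grind), vonMangoldt_apply_prime (Nat.prime_of_mem_primesLE hp)]

theorem one_sub_ne_zero_of_norm_le_half {𝕜 : Type*} [NormedDivisionRing 𝕜] {x : 𝕜}
    (hx : ‖x‖ ≤ 1 / 2) : 1 - x ≠ 0 := by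
  rw [sub_ne_zero]
  rintro rfl
  norm_num at hx

theorem norm_inv_one_sub_le_two {𝕜 : Type*} [NormedDivisionRing 𝕜] {x : 𝕜} (hx : ‖x‖ ≤ 1 / 2) :
    ‖(1 - x)⁻¹‖ ≤ 2 := by
  have h : 1 / 2 ≤ ‖1 - x‖ := by
    have := norm_sub_norm_le (1 : 𝕜) x
    rw [norm_one] at this
    linarith
  rw [norm_inv]
  calc ‖1 - x‖⁻¹ ≤ (1 / 2)⁻¹ := inv_anti₀ (by norm_num) h
    _ = 2 := by norm_num

theorem norm_natCast_cpow_neg_le_half {p : ℕ} (hp : 2 ≤ p) {s : ℂ} (hs : 1 ≤ s.re) :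
    ‖(p : ℂ) ^ (-s)‖ ≤ 1 / 2 := by
  rw [norm_natCast_cpow_of_pos (by omega), neg_re]
  calc (p : ℝ) ^ (-s.re) ≤ (2 : ℝ) ^ (-s.re) :=
        Real.rpow_le_rpow_of_nonpos (by norm_num) (by exact_mod_cast hp) (by linarith)
    _ ≤ (2 : ℝ) ^ (-1 : ℝ) := Real.rpow_le_rpow_of_exponent_le (by norm_num) (by linarith)
    _ = 1 / 2 := by norm_num [Real.rpow_neg_one]

theorem one_sub_natCast_cpow_neg_ne_zero {p : ℕ} (hp : 2 ≤ p) {s : ℂ} (hs : 1 ≤ s.re) :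
    1 - (p : ℂ) ^ (-s) ≠ 0 :=
  one_sub_ne_zero_of_norm_le_half (norm_natCast_cpow_neg_le_half hp hs)

theorem hasDerivAt_inv_one_sub_cpow_neg {a s : ℂ} (ha : a ≠ 0) (h : 1 - a ^ (-s) ≠ 0) :
    HasDerivAt (fun z ↦ (1 - a ^ (-z))⁻¹) (-(log a * a ^ (-s)) / (1 - a ^ (-s)) ^ 2) s := by
  have hpow : HasDerivAt (fun z ↦ a ^ (-z)) (a ^ (-s) * log a * (-1)) s :=
    (hasDerivAt_neg s).const_cpow (Or.inl ha)
  have hsub : HasDerivAt (fun z ↦ 1 - a ^ (-z)) (log a * a ^ (-s)) s :=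
    ((hasDerivAt_const s 1).sub hpow).congr_deriv (by ring)
  exact hsub.inv h

theorem logDeriv_inv_one_sub_cpow_neg {a s : ℂ} (ha : a ≠ 0) (h : 1 - a ^ (-s) ≠ 0) :
    logDeriv (fun z ↦ (1 - a ^ (-z))⁻¹) s = -(log a * (a ^ (-s) / (1 - a ^ (-s)))) := by
  rw [logDeriv_apply, (hasDerivAt_inv_one_sub_cpow_neg ha h).deriv]
  field_simp

theorem rpow_neg_le_rpow_one_sub_div {q Y σ : ℝ} (hY : 0 < Y) (hYq : Y ≤ q) (hσ : 1 ≤ σ) :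
    q ^ (-σ) ≤ Y ^ (1 - σ) / q := by
  have hq : 0 < q := hY.trans_le hYq
  rw [show -σ = 1 - σ - 1 by ring, Real.rpow_sub_one hq.ne']
  exact div_le_div_of_nonneg_right (Real.rpow_le_rpow_of_nonpos hY hYq (by linarith)) hq.le

theorem norm_log_mul_pow_div_one_sub_le {p : ℕ} (hp : 2 ≤ p) {s : ℂ} (hs : 1 ≤ s.re) {Y : ℝ}
    (hY : 0 < Y) {M : ℕ} (hM : Y ≤ (p : ℝ) ^ M) :
    ‖(Real.log p : ℂ) * (((p : ℂ) ^ (-s)) ^ M / (1 - (p : ℂ) ^ (-s)))‖ ≤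
      2 * Y ^ (1 - s.re) * (Real.log p / (p : ℝ) ^ M) := by
  have hlog : 0 ≤ Real.log p := Real.log_natCast_nonneg p
  rw [norm_mul, div_eq_mul_inv, norm_mul, norm_pow, norm_natCast_cpow_of_pos (by omega), neg_re,
    norm_real, Real.norm_of_nonneg hlog, Real.rpow_pow_comm (Nat.cast_nonneg p)]
  calc Real.log p * (((p : ℝ) ^ M) ^ (-s.re) * ‖(1 - (p : ℂ) ^ (-s))⁻¹‖)
      ≤ Real.log p * (Y ^ (1 - s.re) / (p : ℝ) ^ M * 2) := by
        gcongr
        · exact rpow_neg_le_rpow_one_sub_div hY hM hs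
        · exact norm_inv_one_sub_le_two (norm_natCast_cpow_neg_le_half hp hs)
    _ = 2 * Y ^ (1 - s.re) * (Real.log p / (p : ℝ) ^ M) := by ring

theorem sum_log_le_log_four_mul {B : Finset ℕ} {x : ℝ} (hx : 0 ≤ x)
    (hB : ∀ p ∈ B, p.Prime ∧ (p : ℝ) ≤ x) : ∑ p ∈ B, Real.log p ≤ Real.log 4 * x := by
  refine le_trans ?_ (Chebyshev.theta_le_log4_mul_x hx)
  rw [Chebyshev.theta_eq_sum_primesLE]
  refine sum_le_sum_of_subset_of_nonneg (fun p hp ↦ ?_) fun p _ _ ↦ Real.log_natCast_nonneg p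
  exact Nat.mem_primesLE.mpr ⟨Nat.le_floor (hB p hp).2, (hB p hp).1⟩

theorem sum_log_div_sq_le_of_log_two_eq {B : Finset ℕ} {k : ℕ}
    (hB : ∀ p ∈ B, p.Prime ∧ Nat.log 2 p = k) :
    ∑ p ∈ B, Real.log p / (p : ℝ) ^ 2 ≤ 2 * Real.log 4 * (1 / 2) ^ k := by
  have hbounds : ∀ p ∈ B, (2 : ℝ) ^ k ≤ p ∧ (p : ℝ) ≤ 2 ^ (k + 1) := fun p hp ↦ by
    obtain ⟨hp, rfl⟩ := hB p hp
    exact ⟨by exact_mod_cast Nat.pow_log_le_self 2 hp.ne_zero,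
      by exact_mod_cast (Nat.lt_pow_succ_log_self one_lt_two p).le⟩
  calc ∑ p ∈ B, Real.log p / (p : ℝ) ^ 2
      ≤ ∑ p ∈ B, Real.log p / ((2 : ℝ) ^ k) ^ 2 := by
        refine sum_le_sum fun p hp ↦ ?_
        gcongr
        exact (hbounds p hp).1
    _ = (∑ p ∈ B, Real.log p) / ((2 : ℝ) ^ k) ^ 2 := (sum_div ..).symm
    _ ≤ Real.log 4 * 2 ^ (k + 1) / ((2 : ℝ) ^ k) ^ 2 := by
        gcongr
        exact sum_log_le_log_four_mul (by positivity) fun p hp ↦ ⟨(hB p hp).1, (hbounds p hp).2⟩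
    _ = 2 * Real.log 4 * (1 / 2) ^ k := by
        rw [one_div_pow]
        field_simp
        ring

theorem sum_log_div_sq_le {a : ℝ} (ha : 0 < a) {A : Finset ℕ}
    (hA : ∀ p ∈ A, p.Prime ∧ a < p) :
    ∑ p ∈ A, Real.log p / (p : ℝ) ^ 2 ≤ 8 * Real.log 4 / a := by
  set k₀ := Nat.log 2 ⌊a⌋₊
  have hmaps : ∀ p ∈ A, Nat.log 2 p ∈ Ico k₀ (A.sup (Nat.log 2) + 1) := fun p hp ↦
    mem_Ico.mpr ⟨Nat.log_mono_right (Nat.floor_le_of_le (hA p hp).2.le),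
      Nat.lt_succ_of_le (le_sup hp)⟩
  have ha₀ : a ≤ 2 * 2 ^ k₀ := by
    have h : ⌊a⌋₊ + 1 ≤ 2 * 2 ^ k₀ := by
      have := Nat.lt_pow_succ_log_self one_lt_two ⌊a⌋₊
      rw [pow_succ] at this
      lia
    have h' : (⌊a⌋₊ : ℝ) + 1 ≤ 2 * 2 ^ k₀ := by exact_mod_cast h
    linarith [Nat.lt_floor_add_one a]
  rw [← sum_fiberwise_of_maps_to hmaps]
  calc ∑ k ∈ Ico k₀ (A.sup (Nat.log 2) + 1), ∑ p ∈ A with Nat.log 2 p = k,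
        Real.log p / (p : ℝ) ^ 2
      ≤ ∑ k ∈ Ico k₀ (A.sup (Nat.log 2) + 1), 2 * Real.log 4 * (1 / 2 : ℝ) ^ k :=
        sum_le_sum fun k _ ↦ sum_log_div_sq_le_of_log_two_eq fun p hp ↦
          ⟨(hA p (mem_filter.mp hp).1).1, (mem_filter.mp hp).2⟩
    _ ≤ 2 * Real.log 4 * ((1 / 2 : ℝ) ^ k₀ / (1 - 1 / 2)) := by
        rw [← mul_sum]
        gcongr
        exact geom_sum_Ico_le_of_lt_one (by norm_num) (by norm_num)
    _ = 8 * Real.log 4 / (2 * 2 ^ k₀) := by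
        rw [one_div_pow]
        field_simp
        ring
    _ ≤ 8 * Real.log 4 / a := by gcongr

theorem lt_pow_succ_log_floor {p : ℕ} (hp : 1 < p) {Y : ℝ} (hY : 0 ≤ Y) :
    Y < (p : ℝ) ^ (p.log ⌊Y⌋₊ + 1) := by
  exact_mod_cast (Nat.floor_lt hY).mp (Nat.lt_pow_succ_log_self hp ⌊Y⌋₊)

theorem sum_log_div_pow_succ_log_le {Y : ℝ} (hY : 0 < Y) :
    ∑ p ∈ Nat.primesLE ⌊Y⌋₊, Real.log p / (p : ℝ) ^ (p.log ⌊Y⌋₊ + 1) ≤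
      9 * Real.log 4 / √Y := by
  set P := Nat.primesLE ⌊Y⌋₊
  rw [← sum_filter_add_sum_filter_not P fun p : ℕ ↦ (p : ℝ) ≤ √Y]
  have hsmall : ∑ p ∈ P.filter fun p : ℕ ↦ (p : ℝ) ≤ √Y,
      Real.log p / (p : ℝ) ^ (p.log ⌊Y⌋₊ + 1) ≤ Real.log 4 / √Y := calc
    _ ≤ ∑ p ∈ P.filter fun p : ℕ ↦ (p : ℝ) ≤ √Y, Real.log p / Y := by
        refine sum_le_sum fun p hp ↦ ?_
        have hp := Nat.one_lt_of_mem_primesLE (mem_filter.mp hp).1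
        gcongr
        exact (lt_pow_succ_log_floor hp hY.le).le
    _ = (∑ p ∈ P.filter fun p : ℕ ↦ (p : ℝ) ≤ √Y, Real.log p) / Y := (sum_div ..).symm
    _ ≤ Real.log 4 * √Y / Y := by
        gcongr
        exact sum_log_le_log_four_mul (Real.sqrt_nonneg Y) fun p hp ↦
          ⟨Nat.prime_of_mem_primesLE (mem_filter.mp hp).1, (mem_filter.mp hp).2⟩
    _ = Real.log 4 / √Y := by rw [mul_div_assoc, Real.sqrt_div_self', mul_one_div]
  have hlarge : ∑ p ∈ P.filter fun p : ℕ ↦ ¬(p : ℝ) ≤ √Y,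
      Real.log p / (p : ℝ) ^ (p.log ⌊Y⌋₊ + 1) ≤ 8 * Real.log 4 / √Y := calc
    _ ≤ ∑ p ∈ P.filter fun p : ℕ ↦ ¬(p : ℝ) ≤ √Y, Real.log p / (p : ℝ) ^ 2 := by
        refine sum_le_sum fun p hp ↦ ?_
        have hp := (mem_filter.mp hp).1
        have hlog : 1 ≤ p.log ⌊Y⌋₊ :=
          Nat.log_pos (Nat.one_lt_of_mem_primesLE hp) (Nat.le_of_mem_primesLE hp)
        have hp1 : (1 : ℝ) ≤ p := by exact_mod_cast (Nat.one_lt_of_mem_primesLE hp).le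
        exact div_le_div_of_nonneg_left (Real.log_natCast_nonneg p) (by positivity)
          (pow_le_pow_right₀ hp1 (by omega))
    _ ≤ 8 * Real.log 4 / √Y := sum_log_div_sq_le (Real.sqrt_pos.mpr hY) fun p hp ↦
          ⟨Nat.prime_of_mem_primesLE (mem_filter.mp hp).1, not_le.mp (mem_filter.mp hp).2⟩
  refine (add_le_add hsmall hlarge).trans_eq ?_
  ring

theorem primesUpTo_eq_primesLE (Y : ℝ) : primesUpTo Y = Nat.primesLE ⌊Y⌋₊ := rfl

theorem neg_logDeriv_zetaY (Y : ℝ) {s : ℂ} (hs : 1 ≤ s.re) :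
    -(deriv (zetaY Y) s / zetaY Y s) =
      ∑ p ∈ primesUpTo Y, (Real.log p : ℂ) * ((p : ℂ) ^ (-s) / (1 - (p : ℂ) ^ (-s))) := by
  have hp : ∀ p ∈ primesUpTo Y, (p : ℂ) ≠ 0 ∧ 1 - (p : ℂ) ^ (-s) ≠ 0 := fun p hp ↦
    have h2 := Nat.two_le_of_mem_primesLE hp
    ⟨by exact_mod_cast (by omega : p ≠ 0), one_sub_natCast_cpow_neg_ne_zero h2 hs⟩
  rw [← logDeriv_apply,
    show zetaY Y = fun z ↦ ∏ p ∈ primesUpTo Y, (1 - (p : ℂ) ^ (-z))⁻¹ from rfl,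
    logDeriv_prod (fun p hp' ↦ inv_ne_zero (hp p hp').2)
      (fun p hp' ↦ (hasDerivAt_inv_one_sub_cpow_neg (hp p hp').1 (hp p hp').2).differentiableAt),
    ← sum_neg_distrib]
  refine sum_congr rfl fun p hp' ↦ ?_
  rw [logDeriv_inv_one_sub_cpow_neg (hp p hp').1 (hp p hp').2, neg_neg, natCast_log]

theorem neg_logDeriv_zetaY_sub_sum_vonMangoldt (Y : ℝ) {s : ℂ} (hs : 1 ≤ s.re) :
    -(deriv (zetaY Y) s / zetaY Y s) - ∑ n ∈ Icc 1 ⌊Y⌋₊, (Λ n : ℂ) * (n : ℂ) ^ (-s) =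
      ∑ p ∈ primesUpTo Y, (Real.log p : ℂ) *
        (((p : ℂ) ^ (-s)) ^ (p.log ⌊Y⌋₊ + 1) / (1 - (p : ℂ) ^ (-s))) := by
  rw [neg_logDeriv_zetaY Y hs, sum_Icc_vonMangoldt_mul_eq, primesUpTo_eq_primesLE,
    ← sum_sub_distrib]
  refine sum_congr rfl fun p hp ↦ ?_
  have hx : (p : ℂ) ^ (-s) ≠ 1 :=
    (sub_ne_zero.mp (one_sub_natCast_cpow_neg_ne_zero (Nat.two_le_of_mem_primesLE hp) hs)).symm
  simp only [natCast_pow_cpow]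
  rw [← mul_sum, ← mul_sub, div_one_sub_sub_geom_sum_Icc hx]

/-- For `Y ≥ 2` and `Re s ≥ 1`,
`-ζ'(s,Y)/ζ(s,Y) = ∑_{n ≤ Y} Λ(n) n^{-s} + O(Y^{1/2 - Re s})`
with an absolute implied constant. -/
theorem stmt_10 :
    ∃ C : ℝ, 0 < C ∧ ∀ Y : ℝ, 2 ≤ Y → ∀ s : ℂ, 1 ≤ s.re →
      ‖-(deriv (zetaY Y) s / zetaY Y s) -
          ∑ n ∈ Finset.Icc 1 ⌊Y⌋₊, (ArithmeticFunction.vonMangoldt n : ℂ) * (n : ℂ) ^ (-s)‖ ≤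
        C * Y ^ (1 / 2 - s.re) := by
  refine ⟨18 * Real.log 4, by positivity, fun Y hY s hs ↦ ?_⟩
  have hY₀ : 0 < Y := by linarith
  rw [neg_logDeriv_zetaY_sub_sum_vonMangoldt Y hs, primesUpTo_eq_primesLE]
  calc _ ≤ ∑ p ∈ Nat.primesLE ⌊Y⌋₊,
          2 * Y ^ (1 - s.re) * (Real.log p / (p : ℝ) ^ (p.log ⌊Y⌋₊ + 1)) := by
        refine (norm_sum_le _ _).trans (sum_le_sum fun p hp ↦ ?_)
        exact norm_log_mul_pow_div_one_sub_le (Nat.two_le_of_mem_primesLE hp) hs hY₀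
          (lt_pow_succ_log_floor (Nat.one_lt_of_mem_primesLE hp) hY₀.le).le
    _ ≤ 2 * Y ^ (1 - s.re) * (9 * Real.log 4 / √Y) := by
        rw [← mul_sum]
        gcongr
        exact sum_log_div_pow_succ_log_le hY₀
    _ = 18 * Real.log 4 * Y ^ (1 / 2 - s.re) := by
        rw [show (1 / 2 - s.re) = (1 - s.re) - 1 / 2 by ring, Real.rpow_sub hY₀ (1 - s.re),
          Real.sqrt_eq_rpow]
        ring
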